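/- With U(m,j) = C(m-j,j)·2^j and C_t = C(2t,t)·2^t, define B_t = Σ_{j=0}^{t-1} U(3t-1, j) − Σ_{j≥t+1} U(3t-1, j) and D_t = Σ_{j=0}^{t-1} U(3t, j) − Σ_{j≥t+1} U(3t, j). Then B_t = C_t/2 − D_t for every t ≥ 1, and consequently 0 < B_t < C_t/2. -/

import Mathlib

def U (m j : ℕ) : ℕ := Nat.choose (m - j) j * 2 ^ j

def C (t : ℕ) : ℕ := Nat.choose (2 * t) t * 2 ^ t

def B (t : ℕ) : ℤ :=
  (∑ j ∈ Finset.range t, U (3 * t - 1) j : ℤ)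
    - ∑ j ∈ Finset.Icc (t + 1) (3 * t), (U (3 * t - 1) j : ℤ)

def D (t : ℕ) : ℤ :=
  (∑ j ∈ Finset.range t, U (3 * t) j : ℤ)
    - ∑ j ∈ Finset.Icc (t + 1) (3 * t), (U (3 * t) j : ℤ)

/-!
Write `E m k = ∑_{j<k} U m j - ∑_{j>k} U m j`, so that `B t = E (3t-1) t` and `D t = E (3t) t`.
Pascal's rule gives `U (m+2) (j+1) = U (m+1) (j+1) + 2 U m j`, and `E` inherits this recurrence:
`E (m+2) (k+1) = E (m+1) (k+1) + 2 E m k`. Together with `E m (k+1) = E m k + U m k + U m (k+1)`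
this expresses `B (t+1)` and `D (t+1)` linearly in `B t`, `D t` and two central-binomial terms.
The defect `B t + D t - C t / 2` is then multiplied by 8 at each step and vanishes at `t = 1`,
while `D (t+1) = D t + 2 B t` and `B (t+1) = 2 B t + 3 D t + 4 U (3t-1) (t-1)` keep both positive.
-/

open Finset

lemma U_eq_zero_of_lt {m j : ℕ} (h : m < 2 * j) : U m j = 0 := by
  simp [U, Nat.choose_eq_zero_of_lt (show m - j < j by omega)]

lemma U_add_two_succ (m j : ℕ) : U (m + 2) (j + 1) = U (m + 1) (j + 1) + 2 * U m j := by
  rcases le_or_gt j m with h | h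
  · rw [U, U, U, show m + 2 - (j + 1) = m - j + 1 by omega,
      show m + 1 - (j + 1) = m - j by omega, Nat.choose_succ_succ]
    ring
  · simp [U_eq_zero_of_lt (show m < 2 * j by omega),
      U_eq_zero_of_lt (show m + 1 < 2 * (j + 1) by omega),
      U_eq_zero_of_lt (show m + 2 < 2 * (j + 1) by omega)]

lemma U_three_mul_add_three (n : ℕ) : U (3 * n + 3) (n + 1) = 2 * U (3 * n + 2) (n + 1) := by
  rw [U, U, show 3 * n + 3 - (n + 1) = 2 * n + 1 + 1 by omega,
    show 3 * n + 2 - (n + 1) = 2 * n + 1 by omega, Nat.choose_succ_succ, ← Nat.choose_symm_half]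
  ring

lemma U_three_mul_add_four (n : ℕ) : U (3 * n + 4) (n + 2) = 4 * U (3 * n + 2) n := by
  rw [U, U, show 3 * n + 4 - (n + 2) = n + 2 + n by omega,
    show 3 * n + 2 - n = n + 2 + n by omega, Nat.choose_symm_add]
  ring

lemma C_succ (n : ℕ) : C (n + 1) = 2 * U (3 * n + 2) (n + 1) := by
  rw [C, ← U_three_mul_add_three, U, show 3 * n + 3 - (n + 1) = 2 * (n + 1) by omega]

def sumU (m k : ℕ) : ℤ := ∑ j ∈ range k, (U m j : ℤ)

lemma sumU_add_two_succ (m k : ℕ) :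
    sumU (m + 2) (k + 1) = sumU (m + 1) (k + 1) + 2 * sumU m k := by
  simp only [sumU, sum_range_succ', U_add_two_succ, Nat.cast_add, Nat.cast_mul, sum_add_distrib,
    mul_sum]
  simp [U]
  ring

lemma sumU_of_le {m n : ℕ} (h : m + 1 ≤ n) : sumU m n = sumU m (m + 1) :=
  (sum_subset (range_subset_range.2 h) fun j hj hj' => by
    simp only [mem_range] at hj hj'
    simp [U_eq_zero_of_lt (show m < 2 * j by omega)]).symm

/-- `∑_{j<k} U m j - ∑_{j>k} U m j`, as `U m j = 0` for `j > m`. -/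
def splitSumU (m k : ℕ) : ℤ := 2 * sumU m k + U m k - sumU m (m + 1)

lemma splitSumU_add_two_succ (m k : ℕ) :
    splitSumU (m + 2) (k + 1) = splitSumU (m + 1) (k + 1) + 2 * splitSumU m k := by
  have hpartial := sumU_add_two_succ m k
  have htotal := sumU_add_two_succ m (m + 2)
  rw [sumU_of_le (show m + 1 + 1 ≤ m + 2 + 1 by omega),
    sumU_of_le (show m + 1 ≤ m + 2 by omega)] at htotal
  have hU : (U (m + 2) (k + 1) : ℤ) = U (m + 1) (k + 1) + 2 * U m k := by
    exact_mod_cast U_add_two_succ m k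
  simp only [splitSumU]
  linarith

lemma splitSumU_succ_right (m k : ℕ) :
    splitSumU m (k + 1) = splitSumU m k + U m k + U m (k + 1) := by
  simp only [splitSumU, sumU, sum_range_succ]
  ring

lemma sum_sub_sum_eq_splitSumU {m k n : ℕ} (hm : m ≤ n) (hk : k ≤ n) :
    ∑ j ∈ range k, (U m j : ℤ) - ∑ j ∈ Icc (k + 1) n, (U m j : ℤ) = splitSumU m k := by
  have hsplit := sum_range_add_sum_Ico (fun j => (U m j : ℤ)) (show k + 1 ≤ n + 1 by omega)
  rw [← Ico_add_one_right_eq_Icc, splitSumU, ← sumU_of_le (show m + 1 ≤ n + 1 by omega)]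
  simp only [sumU, sum_range_succ] at hsplit ⊢
  linarith

lemma B_succ (s : ℕ) : B (s + 1) = splitSumU (3 * s + 2) (s + 1) := by
  rw [B, show 3 * (s + 1) - 1 = 3 * s + 2 by omega, show 3 * (s + 1) = 3 * s + 3 by omega]
  exact sum_sub_sum_eq_splitSumU (by omega) (by omega)

lemma D_succ (s : ℕ) : D (s + 1) = splitSumU (3 * s + 3) (s + 1) := by
  rw [D, show 3 * (s + 1) = 3 * s + 3 by omega]
  exact sum_sub_sum_eq_splitSumU le_rfl (by omega)

lemma B_succ_succ_and_D_succ_succ (s : ℕ) :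
    B (s + 2) = 2 * B (s + 1) + 3 * D (s + 1) + 4 * U (3 * s + 2) s ∧
      D (s + 2) = 6 * B (s + 1) + 5 * D (s + 1) - 4 * U (3 * s + 2) (s + 1) := by
  rw [B_succ, B_succ, D_succ, D_succ, show 3 * (s + 1) + 2 = 3 * s + 3 + 2 by ring,
    show 3 * (s + 1) + 3 = 3 * s + 4 + 2 by ring]
  have e1 := splitSumU_add_two_succ (3 * s + 3) (s + 1)
  have e2 := splitSumU_add_two_succ (3 * s + 4) (s + 1)
  have e3 := splitSumU_add_two_succ (3 * s + 2) s
  have e4 := splitSumU_succ_right (3 * s + 4) (s + 1)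
  have e5 := splitSumU_succ_right (3 * s + 2) s
  have u1 : (U (3 * s + 4) (s + 1) : ℤ) = U (3 * s + 3) (s + 1) + 2 * U (3 * s + 2) s := by
    exact_mod_cast U_add_two_succ (3 * s + 2) s
  have u2 : (U (3 * s + 3) (s + 1) : ℤ) = 2 * U (3 * s + 2) (s + 1) := by
    exact_mod_cast U_three_mul_add_three s
  have u3 : (U (3 * s + 4) (s + 2) : ℤ) = 4 * U (3 * s + 2) s := by
    exact_mod_cast U_three_mul_add_four s
  constructor <;> linarith

lemma B_add_D (s : ℕ) : B (s + 1) + D (s + 1) = U (3 * s + 2) (s + 1) := by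
  induction s with
  | zero => decide
  | succ s ih =>
    obtain ⟨hB, hD⟩ := B_succ_succ_and_D_succ_succ s
    have hU : (U (3 * (s + 1) + 2) (s + 1 + 1) : ℤ) =
        4 * U (3 * s + 2) (s + 1) + 4 * U (3 * s + 2) s := by
      have h := U_add_two_succ (3 * s + 3) (s + 1)
      rw [U_three_mul_add_three, U_three_mul_add_four] at h
      rw [show 3 * (s + 1) + 2 = 3 * s + 3 + 2 by ring]
      push_cast [h]
      ring
    rw [hU]
    linarith

lemma B_pos_and_D_pos (s : ℕ) : 0 < B (s + 1) ∧ 0 < D (s + 1) := by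
  induction s with
  | zero => decide
  | succ s ih =>
    obtain ⟨hB, hD⟩ := B_succ_succ_and_D_succ_succ s
    have hsum := B_add_D s
    have hU : (0 : ℤ) ≤ U (3 * s + 2) s := by positivity
    constructor <;> linarith

theorem stmt14 (t : ℕ) (ht : 1 ≤ t) :
    (B t : ℚ) = (C t : ℚ) / 2 - (D t : ℚ) ∧
      0 < (B t : ℚ) ∧ (B t : ℚ) < (C t : ℚ) / 2 := by
  obtain ⟨s, rfl⟩ : ∃ s, t = s + 1 := ⟨t - 1, by omega⟩
  have hsum : (B (s + 1) : ℚ) + D (s + 1) = U (3 * s + 2) (s + 1) := by exact_mod_cast B_add_D s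
  have hC : (C (s + 1) : ℚ) = 2 * U (3 * s + 2) (s + 1) := by exact_mod_cast C_succ s
  obtain ⟨hB, hD⟩ := B_pos_and_D_pos s
  have hBq : (0 : ℚ) < B (s + 1) := by exact_mod_cast hB
  have hDq : (0 : ℚ) < D (s + 1) := by exact_mod_cast hD
  refine ⟨by linarith, hBq, by linarith⟩
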